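/- arXiv:math/0112007 — 2 statements merged into one kernel-verified Lean document; each statement's English description precedes it below -/
import Mathlib

section
/- Let Σ be a Fano fan of dimension n and x ∈ G(Σ). Then x is contained in at most three primitive collections of Σ of order two. Consequently, for the irreducible invariant divisor D = V(x) of X = X_Σ, whose Picard number equals ρ_D = #{y ∈ G(Σ) : y ≠ x and ⟨x,y⟩ ∈ Σ} − (n−1), one has 0 ≤ ρ_X − ρ_D ≤ 3; moreover ρ_X − ρ_D equals exactly the number of primitive collections of order two containing x. -/
open Finset

namespace ToricFano

/-- The lattice `N ≅ ℤⁿ`. -/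
abbrev NZ (n : ℕ) := Fin n → ℤ
/-- The rational vector space `N_ℚ ≅ ℚⁿ`. -/
abbrev NQ (n : ℕ) := Fin n → ℚ

/-- The canonical map `N → N_ℚ`. -/
def toQ {n : ℕ} (v : NZ n) : NQ n := fun i => (v i : ℚ)

/-- The cone (set of nonnegative rational combinations) spanned by a finite set of
lattice points. -/
def coneSpan {n : ℕ} (s : Finset (NZ n)) : Set (NQ n) :=
  { p | ∃ c : NZ n → ℚ, (∀ v, 0 ≤ c v) ∧ p = ∑ v ∈ s, c v • toQ v }

/-- The relative interior of the cone spanned by a finite set of lattice points. -/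
def relInt {n : ℕ} (s : Finset (NZ n)) : Set (NQ n) :=
  { p | ∃ c : NZ n → ℚ, (∀ v ∈ s, 0 < c v) ∧ p = ∑ v ∈ s, c v • toQ v }

/-- A smooth complete fan of dimension `n`, encoded combinatorially: a cone is recorded
as the finite set of the primitive generators of its rays. -/
structure Fan (n : ℕ) where
  gens : Finset (NZ n)
  cones : Finset (Finset (NZ n))
  empty_mem : ∅ ∈ cones
  cones_subset : ∀ σ ∈ cones, σ ⊆ gens
  gens_mem : ∀ x ∈ gens, ({x} : Finset (NZ n)) ∈ cones
  downward : ∀ σ ∈ cones, ∀ τ ⊆ σ, τ ∈ cones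
  smooth : ∀ σ ∈ cones, ∃ B : Module.Basis (Fin n) ℤ (NZ n), (σ : Set (NZ n)) ⊆ Set.range B
  inter : ∀ σ ∈ cones, ∀ τ ∈ cones, coneSpan σ ∩ coneSpan τ = coneSpan (σ ∩ τ)
  complete : ∀ p : NQ n, ∃ σ ∈ cones, p ∈ coneSpan σ

/-- `P` is a primitive collection: a set of generators not spanning a cone, every proper
subset of which spans a cone. -/
def IsPrimColl {n : ℕ} (F : Fan n) (P : Finset (NZ n)) : Prop :=
  P ⊆ F.gens ∧ P ∉ F.cones ∧ ∀ Q ⊂ P, Q ∈ F.cones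

/-- The primitive relation of the primitive collection `P`: `σ` is the unique cone of the
fan whose relative interior contains `∑ P`, and `a` records the (positive) coefficients,
so that `∑_{v∈P} v = ∑_{v∈σ} a v • v`. -/
def IsPrimRel {n : ℕ} (F : Fan n) (P σ : Finset (NZ n)) (a : NZ n → ℕ) : Prop :=
  IsPrimColl F P ∧ σ ∈ F.cones ∧ (∀ v, v ∉ σ → a v = 0) ∧ (∀ v ∈ σ, 0 < a v) ∧
    ∑ v ∈ P, v = ∑ v ∈ σ, (a v : ℤ) • v

/-- The degree of the primitive relation with collection `P`, cone `σ`, coefficients `a`. -/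
def prDegree {n : ℕ} (P σ : Finset (NZ n)) (a : NZ n → ℕ) : ℤ :=
  (P.card : ℤ) - ∑ v ∈ σ, (a v : ℤ)

/-- A complete smooth fan is Fano when the convex hull of the generators is a polytope
with vertex set exactly the generators whose face fan is the fan itself: equivalently,
for each maximal cone the linear functional taking value `1` on its generators takes
values `< 1` on all other generators. -/
def IsFano {n : ℕ} (F : Fan n) : Prop :=
  ∀ σ ∈ F.cones, σ.card = n →
    ∃ u : NQ n →ₗ[ℚ] ℚ, (∀ v ∈ σ, u (toQ v) = 1) ∧
      ∀ z ∈ F.gens, z ∉ σ → u (toQ z) < 1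

/-- An integral/rational relation among the generators, i.e. an element of `A₁(Σ) ⊗ ℚ`. -/
def IsRel {n : ℕ} (F : Fan n) (r : NZ n → ℚ) : Prop :=
  (∀ v, v ∉ F.gens → r v = 0) ∧ ∑ v ∈ F.gens, r v • toQ v = 0

/-- The relation attached to a wall (an `(n-1)`-dimensional cone) of the fan. -/
def IsWallRel {n : ℕ} (F : Fan n) (r : NZ n → ℚ) : Prop :=
  ∃ ω ∈ F.cones, ω.card = n - 1 ∧ ∃ u u' : NZ n, u ≠ u' ∧ u ∉ ω ∧ u' ∉ ω ∧
    insert u ω ∈ F.cones ∧ insert u' ω ∈ F.cones ∧ IsRel F r ∧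
    r u = 1 ∧ r u' = 1 ∧ ∀ v, v ∉ insert u (insert u' ω) → r v = 0

/-- The Mori cone `NE(Σ)`: the convex cone generated by the wall relations. -/
def NECone {n : ℕ} (F : Fan n) : Set (NZ n → ℚ) :=
  { r | ∃ (k : ℕ) (c : Fin k → ℚ) (w : Fin k → (NZ n → ℚ)),
      (∀ i, 0 ≤ c i) ∧ (∀ i, IsWallRel F (w i)) ∧ r = ∑ i, c i • w i }

/-- A class is extremal if it spans a one-dimensional face of `NE(Σ)`. -/
def IsExtremal {n : ℕ} (F : Fan n) (r : NZ n → ℚ) : Prop :=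
  r ∈ NECone F ∧ ∀ s ∈ NECone F, ∀ t ∈ NECone F, r = s + t →
    (∃ c : ℚ, 0 ≤ c ∧ s = c • r) ∧ ∃ c : ℚ, 0 ≤ c ∧ t = c • r

/-- The numerical class associated to the primitive relation with collection `P` and
coefficients `a` (1 on the elements of `P`, `-a` on the right-hand side). -/
def primRelClass {n : ℕ} (P : Finset (NZ n)) (a : NZ n → ℕ) : NZ n → ℚ :=
  fun v => (if v ∈ P then (1 : ℚ) else 0) - (a v : ℚ)

/-- `FX` refines `FY`: every cone of `FY` is a union of cones of `FX`. -/
def Refines {n : ℕ} (FX FY : Fan n) : Prop :=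
  ∀ τ ∈ FY.cones, ∃ S : Finset (Finset (NZ n)), S ⊆ FX.cones ∧
    coneSpan τ = ⋃ σ ∈ S, coneSpan σ

/-- The combinatorial star subdivision at `τ` of a collection of (smooth simplicial)
cones: insert the new ray through `∑ τ` and subdivide every cone containing `τ`. -/
def starSubCones {n : ℕ} (D : Finset (Finset (NZ n))) (τ : Finset (NZ n)) :
    Finset (Finset (NZ n)) :=
  D.filter (fun σ => ¬ τ ⊆ σ) ∪
    (D.filter (fun μ => ¬ τ ⊆ μ ∧ μ ∪ τ ∈ D)).image (insert (∑ v ∈ τ, v))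

/-- `F'` is the star subdivision of `F` at a cone of dimension at least 2;
it corresponds to the blow-up of the toric variety along an invariant subvariety. -/
def IsStarSubFan {n : ℕ} (F' F : Fan n) : Prop :=
  ∃ τ ∈ F.cones, 2 ≤ τ.card ∧
    F'.gens = insert (∑ v ∈ τ, v) F.gens ∧
    F'.cones = starSubCones F.cones τ

/-- Projectivity of a complete fan: existence of a strictly convex support function,
linear on each maximal cone. -/
def IsProjective {n : ℕ} (F : Fan n) : Prop :=
  ∃ φ : NQ n → ℚ, ∀ σ ∈ F.cones, σ.card = n →
    ∃ u : NQ n →ₗ[ℚ] ℚ, (∀ p ∈ coneSpan σ, φ p = u p) ∧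
      ∀ p, p ∉ coneSpan σ → φ p < u p

/-- A primitive relation is contractible if the fan has Reid's wall-geometry around it
(equivalently, the class admits an equivariant contraction). -/
def IsContractible {n : ℕ} (F : Fan n) (P σ : Finset (NZ n)) (a : NZ n → ℕ) : Prop :=
  IsPrimRel F P σ a ∧
    ∀ ν ∈ F.cones, (σ ∪ ν) ∈ F.cones → (∀ z ∈ ν, z ∉ P ∧ z ∉ σ) →
      ∀ x ∈ P, ((P.erase x) ∪ σ ∪ ν) ∈ F.cones

end ToricFano

/-!
In a Fano fan the linear functional equal to `1` on the generators of a maximal cone is `< 1`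
on all other generators. Writing `x + y` for a primitive pair `{x, y}` as a nonnegative integral
combination of the generators of a cone and evaluating such a functional shows that the
combination has total weight `≤ 1`: so `x + y = 0` or `x + y` is a generator. Conversely, the
sum of the two generators of a 2-dimensional cone is neither `0` nor a generator. Hence the
primitive pairs through `x` are `{x, -x}` and the pairs `{x, y}` with `x + y ∈ G(Σ)`. For two
such `y₁ ≠ y₂` one gets `x + y₁ + y₂ ∈ {0, -x}`, using that two 2-dimensional cones with
disjoint generators cannot have the same generator sum; three of them would give three
distinct sums `x + yᵢ + yⱼ` in a two-element set. Finally `ρ_X - ρ_D` counts the generators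
that are neither `x` nor adjacent to `x`, i.e. the primitive pairs through `x`.
-/

namespace ToricFano

section Coordinates

variable {n : ℕ}

lemma toQ_injective : Function.Injective (toQ (n := n)) := fun _ _ h =>
  funext fun i => by simpa [toQ] using congrFun h i

lemma toQ_add (a b : NZ n) : toQ (a + b) = toQ a + toQ b := by
  funext i; simp [toQ]

lemma toQ_zero : toQ (0 : NZ n) = 0 := by
  funext i; simp [toQ]

lemma toQ_zsmul (c : ℤ) (a : NZ n) : toQ (c • a) = (c : ℚ) • toQ a := by
  funext i; simp [toQ]

lemma toQ_nsmul (c : ℕ) (a : NZ n) : toQ (c • a) = (c : ℚ) • toQ a := by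
  funext i; simp [toQ]

def toQHom (n : ℕ) : NZ n →+ NQ n := AddMonoidHom.mk' toQ toQ_add

lemma toQ_sum {ι : Type*} (s : Finset ι) (f : ι → NZ n) :
    toQ (∑ i ∈ s, f i) = ∑ i ∈ s, toQ (f i) :=
  map_sum (toQHom n) f s

noncomputable def ratBasis (B : Module.Basis (Fin n) ℤ (NZ n)) :
    Module.Basis (Fin n) ℚ (NQ n) :=
  basisOfLinearIndependentOfCardEqFinrank' (fun i => toQ (B i))
    ((LinearIndependent.iff_fractionRing ℤ ℚ).1 <|
      B.linearIndependent.map' (toQHom n).toIntLinearMap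
        (LinearMap.ker_eq_bot.2 toQ_injective))
    (by simp)

lemma coneSpan_empty : coneSpan (∅ : Finset (NZ n)) = {0} := by
  ext p
  constructor
  · rintro ⟨c, -, rfl⟩
    simp
  · rintro rfl
    exact ⟨0, fun _ => le_rfl, by simp⟩

lemma toQ_add_mem_coneSpan_pair (a b : NZ n) :
    toQ (a + b) ∈ coneSpan {a, b} := by
  by_cases hab : a = b
  · subst hab
    refine ⟨fun _ => 2, fun _ => zero_le_two, ?_⟩
    simp [toQ_add, two_smul]
  · refine ⟨fun _ => 1, fun _ => zero_le_one, ?_⟩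
    simp [Finset.sum_pair hab, toQ_add]

lemma add_self_ne_zero {v : NZ n} (hv : v ≠ 0) : v + v ≠ 0 := fun h =>
  hv (funext fun i => by
    have := congrFun h i
    simp only [Pi.add_apply, Pi.zero_apply] at this ⊢
    omega)

variable (B : Module.Basis (Fin n) ℤ (NZ n))

lemma ratBasis_apply (i : Fin n) : ratBasis B i = toQ (B i) := by
  simp [ratBasis]

lemma ratBasis_repr_toQ (p : NZ n) (i : Fin n) :
    (ratBasis B).repr (toQ p) i = B.repr p i := by
  conv_lhs => rw [← B.sum_repr p, toQ_sum]
  simp_rw [toQ_zsmul, ← ratBasis_apply, Module.Basis.repr_sum_self]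

lemma ratBasis_repr_sum {τ : Finset (NZ n)} (hB : ↑τ ⊆ Set.range B) (c : NZ n → ℚ)
    (i : Fin n) :
    (ratBasis B).repr (∑ v ∈ τ, c v • toQ v) i = if B i ∈ τ then c (B i) else 0 := by
  have hδ : ∀ v ∈ τ, (ratBasis B).repr (toQ v) i = if B i = v then 1 else 0 := by
    intro v hv
    obtain ⟨j, rfl⟩ := hB hv
    rw [← ratBasis_apply, Module.Basis.repr_self, Finsupp.single_apply]
    simp [B.injective.eq_iff, eq_comm]
  simp only [map_sum, map_smul, Finsupp.coe_finsetSum, Finset.sum_apply, Finsupp.smul_apply,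
    smul_eq_mul]
  rw [Finset.sum_congr rfl fun v hv => by rw [hδ v hv]]
  simp

lemma repr_eq_of_toQ_eq_sum {τ : Finset (NZ n)} (hB : ↑τ ⊆ Set.range B) {p : NZ n}
    {c : NZ n → ℚ} (hp : toQ p = ∑ v ∈ τ, c v • toQ v) (i : Fin n) :
    (B.repr p i : ℚ) = if B i ∈ τ then c (B i) else 0 := by
  rw [← ratBasis_repr_toQ, hp, ratBasis_repr_sum B hB]

lemma toQ_mem_coneSpan_iff {τ : Finset (NZ n)} (hB : ↑τ ⊆ Set.range B) (p : NZ n) :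
    toQ p ∈ coneSpan τ ↔ ∀ i, 0 ≤ B.repr p i ∧ (B i ∉ τ → B.repr p i = 0) := by
  constructor
  · rintro ⟨c, hc, hp⟩ i
    have h := repr_eq_of_toQ_eq_sum B hB hp i
    split_ifs at h with hi
    · exact ⟨by exact_mod_cast h ▸ hc _, fun h' => absurd hi h'⟩
    · exact ⟨by exact_mod_cast h.ge, fun _ => by exact_mod_cast h⟩
  · intro h
    refine ⟨fun v => ∑ j, if B j = v then (B.repr p j : ℚ) else 0,
      fun v => Finset.sum_nonneg fun j _ => ?_, ?_⟩
    · split_ifs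
      · exact_mod_cast (h j).1
      · exact le_rfl
    · refine (ratBasis B).repr.injective (Finsupp.ext fun i => ?_)
      rw [ratBasis_repr_toQ, ratBasis_repr_sum B hB]
      split_ifs with hi
      · simp [B.injective.eq_iff]
      · exact_mod_cast (h i).2 hi

lemma exists_nat_coeffs {τ : Finset (NZ n)} (hB : ↑τ ⊆ Set.range B) {p : NZ n}
    (hp : toQ p ∈ coneSpan τ) : ∃ a : NZ n → ℕ, p = ∑ v ∈ τ, a v • v := by
  obtain ⟨c, hc, hpc⟩ := hp
  refine ⟨fun v => ⌊c v⌋₊, toQ_injective ?_⟩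
  rw [hpc, toQ_sum]
  refine Finset.sum_congr rfl fun v hv => ?_
  obtain ⟨i, rfl⟩ := hB hv
  have h := repr_eq_of_toQ_eq_sum B hB hpc i
  rw [if_pos hv] at h
  rw [toQ_nsmul, natCast_floor_eq_intCast_floor (hc _), ← h, Int.floor_intCast]

end Coordinates

namespace Fan

variable {n : ℕ} (F : Fan n)

lemma ne_zero_of_mem_gens {x : NZ n} (hx : x ∈ F.gens) : x ≠ 0 := by
  obtain ⟨B, hB⟩ := F.smooth {x} (F.gens_mem x hx)
  obtain ⟨i, rfl⟩ := hB (Finset.mem_coe.2 (Finset.mem_singleton_self _))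
  exact B.ne_zero i

/-- Generators are primitive lattice vectors. -/
lemma add_self_notMem_gens (v : NZ n) : v + v ∉ F.gens := fun hv => by
  obtain ⟨B, hB⟩ := F.smooth {v + v} (F.gens_mem _ hv)
  obtain ⟨i, hi⟩ := hB (Finset.mem_coe.2 (Finset.mem_singleton_self _))
  have h := congrArg (fun w => B.repr w i) hi
  simp only [Module.Basis.repr_self, Finsupp.single_eq_same, map_add, Finsupp.add_apply] at h
  omega

lemma add_self_notMem_insert_zero_gens {v : NZ n} (hv : v ≠ 0) :
    v + v ∉ insert 0 F.gens := by
  rw [Finset.mem_insert, not_or]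
  exact ⟨add_self_ne_zero hv, F.add_self_notMem_gens v⟩

lemma mem_of_toQ_mem_coneSpan {σ : Finset (NZ n)} (hσ : σ ∈ F.cones) {g : NZ n}
    (hg : g ∈ F.gens) (h : toQ g ∈ coneSpan σ) : g ∈ σ := by
  by_contra hgσ
  have hmem : toQ g ∈ coneSpan ({g} ∩ σ) := by
    rw [← F.inter _ (F.gens_mem g hg) σ hσ]
    exact ⟨⟨fun _ => 1, fun _ => zero_le_one, by simp⟩, h⟩
  rw [Finset.singleton_inter_of_notMem hgσ, coneSpan_empty] at hmem
  exact F.ne_zero_of_mem_gens hg (toQ_injective (hmem.trans toQ_zero.symm))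

lemma add_notMem_insert_zero_gens_of_pair_mem_cones {a b : NZ n}
    (h : {a, b} ∈ F.cones) (hab : a ≠ b) : a + b ∉ insert 0 F.gens := by
  have ha : a ∈ ({a, b} : Finset (NZ n)) := Finset.mem_insert_self a {b}
  have hb : b ∈ ({a, b} : Finset (NZ n)) := Finset.mem_insert_of_mem (Finset.mem_singleton_self b)
  rw [Finset.mem_insert, not_or]
  constructor
  · obtain ⟨B, hB⟩ := F.smooth _ h
    obtain ⟨i, rfl⟩ := hB (Finset.mem_coe.2 ha)
    obtain ⟨j, rfl⟩ := hB (Finset.mem_coe.2 hb)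
    intro h0
    have := congrArg (fun w => B.repr w i) h0
    have hji : j ≠ i := fun hji => hab (hji ▸ rfl)
    simp [hji] at this
  · intro hg
    rcases Finset.mem_insert.1 (F.mem_of_toQ_mem_coneSpan h hg (toQ_add_mem_coneSpan_pair a b))
      with h' | h'
    · exact F.ne_zero_of_mem_gens (F.cones_subset _ h hb) (by simpa using h')
    · exact F.ne_zero_of_mem_gens (F.cones_subset _ h ha) (by simpa using h')

/-- Two cones with disjoint generators meet only at the origin. -/
lemma add_ne_add_of_disjoint {a b c d : NZ n} (hab : {a, b} ∈ F.cones)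
    (hcd : {c, d} ∈ F.cones) (hne : a ≠ b) (hdisj : Disjoint ({a, b} : Finset (NZ n)) {c, d}) :
    a + b ≠ c + d := by
  intro h
  have hmem : toQ (a + b) ∈ coneSpan ({a, b} ∩ {c, d}) := by
    rw [← F.inter _ hab _ hcd]
    exact ⟨toQ_add_mem_coneSpan_pair a b, h ▸ toQ_add_mem_coneSpan_pair c d⟩
  rw [Finset.disjoint_iff_inter_eq_empty.1 hdisj, coneSpan_empty] at hmem
  exact F.add_notMem_insert_zero_gens_of_pair_mem_cones hab hne
    (Finset.mem_insert.2 (Or.inl (toQ_injective (hmem.trans toQ_zero.symm))))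

lemma card_le_of_mem_cones {σ : Finset (NZ n)} (hσ : σ ∈ F.cones) : σ.card ≤ n := by
  obtain ⟨B, hB⟩ := F.smooth σ hσ
  have hsub : σ ⊆ Finset.univ.image B := fun v hv => by
    obtain ⟨i, rfl⟩ := hB hv
    exact Finset.mem_image_of_mem B (Finset.mem_univ i)
  simpa using (Finset.card_le_card hsub).trans Finset.card_image_le

lemma exists_ssuperset_of_card_lt {σ : Finset (NZ n)} (hσ : σ ∈ F.cones) (hlt : σ.card < n) :
    ∃ τ ∈ F.cones, σ ⊂ τ := by
  obtain ⟨B, hB⟩ := F.smooth σ hσ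
  obtain ⟨i₀, hi₀⟩ : ∃ i₀, B i₀ ∉ σ := by
    by_contra! h
    have := Finset.card_le_card (s := Finset.univ.image B)
      (Finset.image_subset_iff.2 fun i _ => h i)
    rw [Finset.card_image_of_injective _ B.injective, Finset.card_univ, Fintype.card_fin] at this
    omega
  set q := ∑ v ∈ σ, v
  have hq : ∀ j, B.repr q j = if B j ∈ σ then 1 else 0 := fun j => by
    exact_mod_cast repr_eq_of_toQ_eq_sum B hB (c := fun _ => 1) (by simp [q, toQ_sum]) j
  -- Push the barycentre `q` of `σ` off `σ` along `B i₀`; finitely many cones cover the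
  -- points `(M : ℤ) • q + B i₀`, so one cone `τ` contains them for arbitrarily large `M`.
  obtain ⟨τ, hτ, hfreq⟩ : ∃ τ ∈ F.cones,
      ∃ᶠ M : ℕ in Filter.atTop, toQ ((M : ℤ) • q + B i₀) ∈ coneSpan τ :=
    F.cones.frequently_exists.1 (Filter.Frequently.of_forall fun M => F.complete _)
  obtain ⟨B', hB'⟩ := F.smooth τ hτ
  have hqτ : toQ q ∈ coneSpan τ := by
    refine (toQ_mem_coneSpan_iff B' hB' q).2 fun i => ?_
    obtain ⟨M, hM, hmem⟩ := Filter.frequently_atTop.1 hfreq (B'.repr (B i₀) i).natAbs.succ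
    have hcoord := (toQ_mem_coneSpan_iff B' hB' _).1 hmem i
    simp only [map_add, map_zsmul, Finsupp.add_apply, Finsupp.smul_apply, smul_eq_mul] at hcoord
    have hM' : -(M : ℤ) < B'.repr (B i₀) i ∧ B'.repr (B i₀) i < M := by omega
    exact ⟨by nlinarith [hcoord.1], fun hi => by nlinarith [hcoord.2 hi, hcoord.1]⟩
  have hστ : σ ⊆ τ := by
    have hqστ : toQ q ∈ coneSpan (σ ∩ τ) := by
      rw [← F.inter σ hσ τ hτ]
      exact ⟨⟨fun _ => 1, fun _ => zero_le_one, by simp [q, toQ_sum]⟩, hqτ⟩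
    intro v hv
    obtain ⟨j, rfl⟩ := hB hv
    have := (toQ_mem_coneSpan_iff B ((Finset.coe_subset.2 Finset.inter_subset_left).trans hB)
      q).1 hqστ j
    by_contra hj
    simp [hq, hv, Finset.mem_inter, hj] at this
  refine ⟨τ, hτ, Finset.ssubset_iff_subset_ne.2 ⟨hστ, ?_⟩⟩
  rintro rfl
  obtain ⟨M, -, hmem⟩ := Filter.frequently_atTop.1 hfreq 0
  have := ((toQ_mem_coneSpan_iff B hB _).1 hmem i₀).2 hi₀
  simp only [map_add, map_zsmul, Finsupp.add_apply, Finsupp.smul_apply, smul_eq_mul, hq,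
    if_neg hi₀, Module.Basis.repr_self, Finsupp.single_eq_same] at this
  omega

lemma exists_superset_card_eq {σ : Finset (NZ n)} (hσ : σ ∈ F.cones) :
    ∃ τ ∈ F.cones, σ ⊆ τ ∧ τ.card = n := by
  obtain ⟨τ, hτ, hmax⟩ := (F.cones.filter (σ ⊆ ·)).exists_max_image Finset.card
    ⟨σ, Finset.mem_filter.2 ⟨hσ, subset_rfl⟩⟩
  rw [Finset.mem_filter] at hτ
  refine ⟨τ, hτ.1, hτ.2, (F.card_le_of_mem_cones hτ.1).antisymm (not_lt.1 fun hlt => ?_)⟩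
  obtain ⟨ρ, hρ, hτρ⟩ := F.exists_ssuperset_of_card_lt hτ.1 hlt
  exact (Finset.card_lt_card hτρ).not_ge
    (hmax ρ (Finset.mem_filter.2 ⟨hρ, hτ.2.trans hτρ.subset⟩))

lemma isPrimColl_pair_iff {x y : NZ n} (hx : x ∈ F.gens) (hy : y ∈ F.gens) :
    IsPrimColl F {x, y} ↔ y ≠ x ∧ {x, y} ∉ F.cones := by
  constructor
  · rintro ⟨-, hnc, -⟩
    refine ⟨?_, hnc⟩
    rintro rfl
    exact hnc (by simpa using F.gens_mem y hy)
  · rintro ⟨hyx, hnc⟩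
    refine ⟨Finset.insert_subset hx (Finset.singleton_subset_iff.2 hy), hnc, fun Q hQ => ?_⟩
    obtain ⟨a, ha, hQa⟩ := Finset.ssubset_iff_exists_subset_erase.1 hQ
    rcases Finset.mem_insert.1 ha with rfl | ha
    · exact F.downward _ (F.gens_mem y hy) Q (hQa.trans (Finset.erase_insert_subset _ _))
    · rw [Finset.mem_singleton.1 ha, Finset.pair_comm] at hQa
      exact F.downward _ (F.gens_mem x hx) Q (hQa.trans (Finset.erase_insert_subset _ _))

lemma card_gens_eq {x : NZ n} (hx : x ∈ F.gens) :
    F.gens.card = 1 +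
      ({y | y ∈ F.gens ∧ y ≠ x ∧ ({x, y} : Finset (NZ n)) ∈ F.cones} : Set (NZ n)).ncard +
      ({y | y ∈ F.gens ∧ IsPrimColl F {x, y}} : Set (NZ n)).ncard := by
  classical
  have hfilter : ∀ p : NZ n → Prop, [DecidablePred p] →
      ({y | y ∈ F.gens ∧ p y} : Set (NZ n)).ncard = (F.gens.filter p).card := fun p _ => by
    rw [← Set.ncard_coe_finset, Finset.coe_filter]
  rw [hfilter, hfilter, ← Finset.card_filter_add_card_filter_not (s := F.gens)
    (fun y => y ≠ x ∧ ({x, y} : Finset (NZ n)) ∈ F.cones)]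
  have hrest : F.gens.filter (fun y => ¬(y ≠ x ∧ ({x, y} : Finset (NZ n)) ∈ F.cones)) =
      insert x (F.gens.filter fun y => IsPrimColl F {x, y}) := by
    ext y
    by_cases hy : y ∈ F.gens
    · simp only [Finset.mem_filter, Finset.mem_insert, F.isPrimColl_pair_iff hx hy]
      tauto
    · simp only [Finset.mem_filter, Finset.mem_insert, hy]
      grind
  have hx' : x ∉ F.gens.filter fun y => IsPrimColl F {x, y} := fun h =>
    ((F.isPrimColl_pair_iff hx hx).1 (Finset.mem_filter.1 h).2).1 rfl
  rw [hrest, Finset.card_insert_of_notMem hx']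
  omega

end Fan

lemma sum_nsmul_mem_insert_zero {M : Type*} [AddCommMonoid M] [DecidableEq M] {s : Finset M}
    {a : M → ℕ} (h : ∑ v ∈ s, a v ≤ 1) : ∑ v ∈ s, a v • v ∈ insert 0 s := by
  rw [Finset.sum_le_one_iff] at h
  by_cases! hw : ∃ w ∈ s, a w ≠ 0
  · obtain ⟨w, hw, haw⟩ := hw
    rw [Finset.sum_eq_single_of_mem w hw fun v hv hvw => ?_, (h w w hw hw haw haw).2, one_smul]
    · exact Finset.mem_insert_of_mem hw
    · by_cases hav : a v = 0
      · rw [hav, zero_smul]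
      · exact absurd (h v w hv hw hav haw).1 hvw
  · rw [Finset.sum_eq_zero fun v hv => by rw [hw v hv, zero_smul]]
    exact Finset.mem_insert_self _ _

namespace IsFano

variable {n : ℕ} {F : Fan n}

lemma add_mem_insert_zero_gens (hF : IsFano F) {x y : NZ n} (hx : x ∈ F.gens)
    (hy : y ∈ F.gens) (hxy : {x, y} ∉ F.cones) : x + y ∈ insert 0 F.gens := by
  obtain ⟨τ, hτ, hmem⟩ := F.complete (toQ (x + y))
  obtain ⟨B, hB⟩ := F.smooth τ hτ
  obtain ⟨a, ha⟩ := exists_nat_coeffs B hB hmem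
  obtain ⟨σ, hσ, hτσ, hcard⟩ := F.exists_superset_card_eq hτ
  obtain ⟨u, hu1, hu2⟩ := hF σ hσ hcard
  have hlt : u (toQ x) + u (toQ y) < 2 := by
    have hle : ∀ g ∈ F.gens, u (toQ g) ≤ 1 := fun g hg => by
      by_cases hgσ : g ∈ σ
      · exact (hu1 g hgσ).le
      · exact (hu2 g hg hgσ).le
    have hout : x ∉ σ ∨ y ∉ σ := by
      by_contra! h
      exact hxy (F.downward σ hσ _ (Finset.insert_subset h.1 (Finset.singleton_subset_iff.2 h.2)))
    rcases hout with h | h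
    · linarith [hu2 x hx h, hle y hy]
    · linarith [hu2 y hy h, hle x hx]
  have hsum : u (toQ x) + u (toQ y) = ∑ v ∈ τ, (a v : ℚ) := by
    rw [← map_add, ← toQ_add, ha, toQ_sum, map_sum]
    refine Finset.sum_congr rfl fun v hv => ?_
    rw [toQ_nsmul, map_smul, hu1 v (hτσ hv), smul_eq_mul, mul_one]
  have h1 : ∑ v ∈ τ, a v < 2 := by
    exact_mod_cast (show ((∑ v ∈ τ, a v : ℕ) : ℚ) < 2 by push_cast; linarith)
  rw [ha]
  exact Finset.insert_subset_insert 0 (F.cones_subset τ hτ)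
    (sum_nsmul_mem_insert_zero (Nat.lt_succ_iff.1 h1))

lemma pair_mem_cones_iff (hF : IsFano F) {a b : NZ n} (ha : a ∈ F.gens) (hb : b ∈ F.gens)
    (hab : a ≠ b) : {a, b} ∈ F.cones ↔ a + b ∉ insert 0 F.gens :=
  ⟨fun h => F.add_notMem_insert_zero_gens_of_pair_mem_cones h hab,
    fun h => by_contra fun h' => h (hF.add_mem_insert_zero_gens ha hb h')⟩

lemma add_ne_add_self (hF : IsFano F) {a b c : NZ n} (ha : a ∈ F.gens) (hb : b ∈ F.gens)
    (hc : c ∈ F.gens) (hab : a ≠ b) (hca : c ≠ a) (hcb : c ≠ b) : a + b ≠ c + c := by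
  intro h
  by_cases hcone : {a, b} ∈ F.cones
  · refine F.add_ne_add_of_disjoint hcone (by simpa using F.gens_mem c hc) hab ?_ h
    simp [hca, hcb]
  · exact F.add_self_notMem_insert_zero_gens (F.ne_zero_of_mem_gens hc)
      (h ▸ hF.add_mem_insert_zero_gens ha hb hcone)

lemma add_ne_of_add_mem_gens (hF : IsFano F) {x y₁ y₂ : NZ n} (hx : x ∈ F.gens)
    (hy₁ : y₁ ∈ F.gens) (hz₁ : x + y₁ ∈ F.gens) (hz₂ : x + y₂ ∈ F.gens) : x + y₁ ≠ y₂ := by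
  rintro rfl
  have hx0 := F.ne_zero_of_mem_gens hx
  refine hF.add_ne_add_self hz₂ hy₁ hz₁ ?_ (by simpa using hx0) (by simpa using hx0) (by abel)
  rw [← add_assoc, Ne, add_eq_right]
  exact add_self_ne_zero hx0

lemma add_add_mem_insert_zero_gens (hF : IsFano F) {x y₁ y₂ : NZ n} (hx : x ∈ F.gens)
    (hy₁ : y₁ ∈ F.gens) (hy₂ : y₂ ∈ F.gens) (h12 : y₁ ≠ y₂) (hz₁ : x + y₁ ∈ F.gens)
    (hz₂ : x + y₂ ∈ F.gens) : x + y₁ + y₂ ∈ insert 0 F.gens := by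
  have hx0 := F.ne_zero_of_mem_gens hx
  have hnc : {x + y₁, y₂} ∉ F.cones ∨ {x + y₂, y₁} ∉ F.cones := by
    by_contra! h
    refine F.add_ne_add_of_disjoint h.1 h.2 (hF.add_ne_of_add_mem_gens hx hy₁ hz₁ hz₂) ?_
      (add_right_comm x y₁ y₂)
    simp [hx0, h12, h12.symm]
  rcases hnc with h | h
  · exact hF.add_mem_insert_zero_gens hz₁ hy₂ h
  · rw [add_right_comm]
    exact hF.add_mem_insert_zero_gens hz₂ hy₁ h

lemma pair_add_mem_cones (hF : IsFano F) {a b : NZ n} (ha : a ∈ F.gens) (hb : b ∈ F.gens)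
    (hab : a + b ∈ F.gens) : {a, a + b} ∈ F.cones := by
  have hb0 := F.ne_zero_of_mem_gens hb
  rw [hF.pair_mem_cones_iff ha hab (by simpa using hb0)]
  intro h
  rcases Finset.mem_insert.1 h with h0 | hg
  · exact F.add_self_notMem_gens (-a) (by rwa [show -a + -a = b by linear_combination -h0])
  · refine F.add_self_notMem_insert_zero_gens (F.ne_zero_of_mem_gens hab) ?_
    exact hF.add_add_mem_insert_zero_gens ha hb hab
      (by simpa using F.ne_zero_of_mem_gens ha) hab hg

lemma add_add_eq_neg (hF : IsFano F) {x y₁ y₂ : NZ n} (hx : x ∈ F.gens)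
    (hy₁ : y₁ ∈ F.gens) (hy₂ : y₂ ∈ F.gens) (h12 : y₁ ≠ y₂) (hz₁ : x + y₁ ∈ F.gens)
    (hz₂ : x + y₂ ∈ F.gens) (hw : x + y₁ + y₂ ∈ F.gens) :
    x + y₁ + y₂ = -x := by
  have hy₁0 := F.ne_zero_of_mem_gens hy₁
  have hy₂0 := F.ne_zero_of_mem_gens hy₂
  have hz₁z₂ : x + y₁ ≠ x + y₂ := by simpa using h12
  have hwx : x + y₁ + y₂ ≠ x := fun h =>
    hF.add_ne_add_self hz₁ hz₂ hx hz₁z₂ (by simpa using hy₁0) (by simpa using hy₂0)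
      (by linear_combination h)
  have hxw : {x, x + y₁ + y₂} ∉ F.cones := by
    intro hc
    have hc' : {x + y₁, x + y₂} ∈ F.cones := by
      rw [hF.pair_mem_cones_iff hz₁ hz₂ hz₁z₂, show x + y₁ + (x + y₂) = x + (x + y₁ + y₂) by abel,
        ← hF.pair_mem_cones_iff hx hw hwx.symm]
      exact hc
    refine F.add_ne_add_of_disjoint hc hc' hwx.symm ?_ (by abel)
    simp [hy₁0, hy₂0]
  rcases Finset.mem_insert.1 (hF.add_mem_insert_zero_gens hx hw hxw) with h0 | hg
  · exact eq_neg_of_add_eq_zero_right h0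
  · exfalso
    have hy₁w : y₁ ≠ x + y₁ + y₂ := fun h =>
      F.ne_zero_of_mem_gens hz₂ (by linear_combination -h)
    exact F.add_notMem_insert_zero_gens_of_pair_mem_cones (hF.pair_add_mem_cones hz₁ hy₂ hw)
      (by simpa using hy₂0) (hF.add_add_mem_insert_zero_gens hx hy₁ hw hy₁w hz₁ hg)

lemma add_add_eq_zero_or_eq_neg (hF : IsFano F) {x y₁ y₂ : NZ n} (hx : x ∈ F.gens)
    (hy₁ : y₁ ∈ F.gens) (hy₂ : y₂ ∈ F.gens) (h12 : y₁ ≠ y₂) (hz₁ : x + y₁ ∈ F.gens)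
    (hz₂ : x + y₂ ∈ F.gens) : x + y₁ + y₂ = 0 ∨ x + y₁ + y₂ = -x := by
  rcases Finset.mem_insert.1 (hF.add_add_mem_insert_zero_gens hx hy₁ hy₂ h12 hz₁ hz₂) with h0 | hw
  · exact Or.inl h0
  · exact Or.inr (hF.add_add_eq_neg hx hy₁ hy₂ h12 hz₁ hz₂ hw)

lemma ncard_add_mem_gens_le_two (hF : IsFano F) {x : NZ n} (hx : x ∈ F.gens) :
    ({y | y ∈ F.gens ∧ x + y ∈ F.gens} : Set (NZ n)).ncard ≤ 2 := by
  by_contra! h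
  obtain ⟨y₁, y₂, y₃, ⟨hy₁, hz₁⟩, ⟨hy₂, hz₂⟩, ⟨hy₃, hz₃⟩, h12, h13, h23⟩ :=
    (Set.two_lt_ncard_iff (F.gens.finite_toSet.subset fun y hy => hy.1)).1 h
  -- the three distinct sums `x + yᵢ + yⱼ` would all lie in `{0, -x}`
  have d12 := hF.add_add_eq_zero_or_eq_neg hx hy₁ hy₂ h12 hz₁ hz₂
  have d13 := hF.add_add_eq_zero_or_eq_neg hx hy₁ hy₃ h13 hz₁ hz₃
  have d23 := hF.add_add_eq_zero_or_eq_neg hx hy₂ hy₃ h23 hz₂ hz₃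
  rcases d12 with e12 | e12 <;> rcases d13 with e13 | e13 <;> rcases d23 with e23 | e23
  all_goals grind

lemma ncard_primColl_pair_le_three (hF : IsFano F) {x : NZ n} (hx : x ∈ F.gens) :
    ({y | y ∈ F.gens ∧ IsPrimColl F {x, y}} : Set (NZ n)).ncard ≤ 3 := by
  have hsub : {y | y ∈ F.gens ∧ IsPrimColl F {x, y}} ⊆
      insert (-x) {y | y ∈ F.gens ∧ x + y ∈ F.gens} := by
    rintro y ⟨hy, hP⟩
    rcases Finset.mem_insert.1 (hF.add_mem_insert_zero_gens hx hy hP.2.1) with h0 | hg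
    · exact Or.inl (eq_neg_of_add_eq_zero_right h0)
    · exact Or.inr ⟨hy, hg⟩
  calc _ ≤ (insert (-x) {y | y ∈ F.gens ∧ x + y ∈ F.gens}).ncard :=
        Set.ncard_le_ncard hsub ((F.gens.finite_toSet.subset fun y hy => hy.1).insert _)
    _ ≤ ({y | y ∈ F.gens ∧ x + y ∈ F.gens} : Set (NZ n)).ncard + 1 := Set.ncard_insert_le _ _
    _ ≤ 3 := by have := hF.ncard_add_mem_gens_le_two hx; omega

end IsFano

/-- In a Fano fan of dimension `n`, any generator `x` lies in at most three primitive
collections of order two; for the invariant divisor `D = V(x)`, whose Picard number is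
`ρ_D = #{y ∈ G(Σ) : y ≠ x, ⟨x,y⟩ ∈ Σ} - (n-1)`, one has `0 ≤ ρ_X - ρ_D ≤ 3` and
`ρ_X - ρ_D` equals the number of primitive collections of order two containing `x`. -/
theorem picard_drop_of_divisor {n : ℕ} (F : Fan n) (hF : IsFano F)
    (x : NZ n) (hx : x ∈ F.gens) :
    let S : Set (NZ n) := {y | y ∈ F.gens ∧ IsPrimColl F {x, y}}
    let ρX : ℤ := (F.gens.card : ℤ) - n
    let ρD : ℤ :=
      (({y | y ∈ F.gens ∧ y ≠ x ∧ ({x, y} : Finset (NZ n)) ∈ F.cones} : Set (NZ n)).ncard : ℤ)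
        - ((n : ℤ) - 1)
    S.ncard ≤ 3 ∧ ρX - ρD = S.ncard ∧ 0 ≤ ρX - ρD ∧ ρX - ρD ≤ 3 := by
  intro S ρX ρD
  have hS : S.ncard ≤ 3 := hF.ncard_primColl_pair_le_three hx
  have hρ : ρX - ρD = S.ncard := by
    have := F.card_gens_eq hx
    simp only [ρX, ρD, S]
    omega
  exact ⟨hS, hρ, hρ ▸ Int.natCast_nonneg _, hρ ▸ by exact_mod_cast hS⟩

end ToricFano
end

section
/- Let Σ be a Fano fan of dimension n, and set f₀ = #G(Σ) and f₁ = the number of 2-dimensional cones of Σ. Suppose that for every generator x ∈ G(Σ) there are at most two primitive collections of order two containing x, and that if there are exactly two, they are {x, −x} and {x, y} with −y ∉ G(Σ) and −x−y ∉ G(Σ). Then Σ has at most (3/4)·f₀ primitive collections of order two; that is, C(f₀,2) − f₁ ≤ (3/4)·f₀, where C(f₀,2) = f₀(f₀−1)/2. -/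
open Finset

/-!
The primitive collections of order two are exactly the pairs of generators spanning no cone, so
they form a graph `E` on `G(Σ)` with `#E = C(f₀,2) - f₁`. By hypothesis every vertex has degree
at most `2`, and a vertex `x` of degree `2` has a neighbour `y` with `-y ∉ G(Σ)`; such a `y` has
degree `1`, since a second edge at `y` would force `-y ∈ G(Σ)`. Sending `x` to `y` is injective,
so if `dᵢ` vertices have degree `i`, then `2 #E = d₁ + 2 d₂` with `d₂ ≤ d₁` and `d₁ + d₂ ≤ f₀`,
whence `4 #E ≤ 3 f₀`.
-/

namespace ToricFano

open scoped Finset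

section PairGraph

variable {α : Type*} [DecidableEq α]

def deg (E : Finset (Finset α)) (x : α) : ℕ := #(E.filter (x ∈ ·))

lemma exists_ne_eq_pair_of_mem {e : Finset α} (he : #e = 2) {x : α} (hx : x ∈ e) :
    ∃ p, p ≠ x ∧ e = {x, p} := by
  obtain ⟨a, b, hab, rfl⟩ := Finset.card_eq_two.mp he
  rcases Finset.mem_insert.mp hx with rfl | hx
  · exact ⟨b, hab.symm, rfl⟩
  · obtain rfl := Finset.mem_singleton.mp hx
    exact ⟨a, hab, Finset.pair_comm a x⟩

variable {E : Finset (Finset α)}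

lemma pair_mem_filter_mem_right {x y : α} (h : {x, y} ∈ E) : {x, y} ∈ E.filter (y ∈ ·) :=
  Finset.mem_filter.mpr ⟨h, Finset.mem_insert_of_mem (Finset.mem_singleton_self y)⟩

lemma exists_pairs_of_one_lt_deg (hE : ∀ e ∈ E, #e = 2) {x : α} (h : 1 < deg E x) :
    ∃ p q, p ≠ q ∧ {x, p} ∈ E ∧ {x, q} ∈ E := by
  obtain ⟨e₁, he₁, e₂, he₂, hne⟩ := Finset.one_lt_card.mp h
  rw [Finset.mem_filter] at he₁ he₂
  obtain ⟨p, -, rfl⟩ := exists_ne_eq_pair_of_mem (hE _ he₁.1) he₁.2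
  obtain ⟨q, -, rfl⟩ := exists_ne_eq_pair_of_mem (hE _ he₂.1) he₂.2
  exact ⟨p, q, fun hpq => hne (by rw [hpq]), he₁.1, he₂.1⟩

lemma exists_pairs_of_two_lt_deg (hE : ∀ e ∈ E, #e = 2) {x : α} (h : 2 < deg E x) :
    ∃ p q r, p ≠ q ∧ p ≠ r ∧ q ≠ r ∧ {x, p} ∈ E ∧ {x, q} ∈ E ∧ {x, r} ∈ E := by
  obtain ⟨e₁, e₂, e₃, he₁, he₂, he₃, h₁₂, h₁₃, h₂₃⟩ := Finset.two_lt_card_iff.mp h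
  rw [Finset.mem_filter] at he₁ he₂ he₃
  obtain ⟨p, -, rfl⟩ := exists_ne_eq_pair_of_mem (hE _ he₁.1) he₁.2
  obtain ⟨q, -, rfl⟩ := exists_ne_eq_pair_of_mem (hE _ he₂.1) he₂.2
  obtain ⟨r, -, rfl⟩ := exists_ne_eq_pair_of_mem (hE _ he₃.1) he₃.2
  exact ⟨p, q, r, fun h => h₁₂ (by rw [h]), fun h => h₁₃ (by rw [h]), fun h => h₂₃ (by rw [h]),
    he₁.1, he₂.1, he₃.1⟩

variable {V : Finset α}

lemma sum_deg_eq_two_mul_card (hE : ∀ e ∈ E, e ⊆ V ∧ #e = 2) :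
    ∑ x ∈ V, deg E x = 2 * #E := by
  calc ∑ x ∈ V, deg E x
      = ∑ e ∈ E, #(V.filter (· ∈ e)) :=
        Finset.sum_card_bipartiteAbove_eq_sum_card_bipartiteBelow (· ∈ ·)
    _ = ∑ e ∈ E, 2 := Finset.sum_congr rfl fun e he => by
        rw [Finset.filter_mem_eq_inter, Finset.inter_eq_right.mpr (hE e he).1, (hE e he).2]
    _ = 2 * #E := by rw [Finset.sum_const, smul_eq_mul, mul_comm]

/-- Matching each vertex of degree `2` with a neighbour of degree at most `1` is injective,
because that neighbour's only edge determines the vertex. -/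
lemma card_deg_eq_two_le_card_deg_eq_one (hE : ∀ e ∈ E, #e = 2)
    (hpartner : ∀ x ∈ V, deg E x = 2 → ∃ y ∈ V, {x, y} ∈ E ∧ deg E y ≤ 1) :
    #(V.filter (deg E · = 2)) ≤ #(V.filter (deg E · = 1)) := by
  have hpartner' : ∀ x ∈ V.filter (deg E · = 2), ∃ y ∈ V, {x, y} ∈ E ∧ deg E y ≤ 1 :=
    fun x hx => hpartner x (Finset.mem_filter.mp hx).1 (Finset.mem_filter.mp hx).2
  choose! f hfV hfE hfdeg using hpartner'
  have hdeg_one : ∀ x ∈ V.filter (deg E · = 2), deg E (f x) = 1 := fun x hx =>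
    le_antisymm (hfdeg x hx)
      (Finset.card_pos.mpr ⟨_, pair_mem_filter_mem_right (hfE x hx)⟩)
  refine Finset.card_le_card_of_injOn f
    (fun x hx => Finset.mem_filter.mpr ⟨hfV x hx, hdeg_one x hx⟩) fun x hx x' hx' hxx' => ?_
  have hsame : ({x, f x} : Finset α) = {x', f x} :=
    Finset.card_le_one.mp (hfdeg x hx) _ (pair_mem_filter_mem_right (hfE x hx)) _
      (hxx' ▸ pair_mem_filter_mem_right (hfE x' hx'))
  have hx_ne : x ≠ f x := fun h => by simpa [← h] using hE _ (hfE x hx)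
  have hx_mem : x ∈ ({x', f x} : Finset α) := hsame ▸ Finset.mem_insert_self x _
  simpa [hx_ne] using hx_mem

theorem four_mul_card_le_three_mul_card (hE : ∀ e ∈ E, e ⊆ V ∧ #e = 2)
    (hdeg : ∀ x ∈ V, deg E x ≤ 2)
    (hpartner : ∀ x ∈ V, deg E x = 2 → ∃ y ∈ V, {x, y} ∈ E ∧ deg E y ≤ 1) :
    4 * #E ≤ 3 * #V := by
  have hsum : ∑ x ∈ V, deg E x = #(V.filter (deg E · = 1)) + 2 * #(V.filter (deg E · = 2)) := by
    rw [Finset.card_filter, Finset.card_filter, Finset.mul_sum, ← Finset.sum_add_distrib]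
    refine Finset.sum_congr rfl fun x hx => ?_
    have := hdeg x hx
    split_ifs <;> omega
  have hdisj : #(V.filter (deg E · = 1)) + #(V.filter (deg E · = 2)) ≤ #V := by
    rw [Finset.card_filter, Finset.card_filter, ← Finset.sum_add_distrib, Finset.card_eq_sum_ones]
    exact Finset.sum_le_sum fun x _ => by split_ifs <;> omega
  have hinj := card_deg_eq_two_le_card_deg_eq_one (fun e he => (hE e he).2) hpartner
  have := sum_deg_eq_two_mul_card hE
  omega

end PairGraph

section OrderTwo

variable {n : ℕ} (F : Fan n)

lemma isPrimColl_iff_of_card_eq_two {P : Finset (NZ n)} (hP : #P = 2) :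
    IsPrimColl F P ↔ P ⊆ F.gens ∧ P ∉ F.cones := by
  refine ⟨fun h => ⟨h.1, h.2.1⟩, fun ⟨hsub, hP'⟩ => ⟨hsub, hP', fun Q hQ => ?_⟩⟩
  have hQ_card : #Q < 2 := hP ▸ Finset.card_lt_card hQ
  rcases Nat.lt_succ_iff_lt_or_eq.mp hQ_card with hQ₀ | hQ₁
  · rw [Finset.card_eq_zero.mp (Nat.lt_one_iff.mp hQ₀)]
    exact F.empty_mem
  · obtain ⟨x, rfl⟩ := Finset.card_eq_one.mp hQ₁
    exact F.gens_mem x (hsub (hQ.subset (Finset.mem_singleton_self x)))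

def orderTwoPrimColls : Finset (Finset (NZ n)) :=
  (F.gens.powersetCard 2).filter (· ∉ F.cones)

variable {F}

lemma mem_orderTwoPrimColls {P : Finset (NZ n)} :
    P ∈ orderTwoPrimColls F ↔ IsPrimColl F P ∧ #P = 2 := by
  rw [orderTwoPrimColls, Finset.mem_filter, Finset.mem_powersetCard]
  exact ⟨fun ⟨⟨hsub, hP⟩, hP'⟩ => ⟨(isPrimColl_iff_of_card_eq_two F hP).mpr ⟨hsub, hP'⟩, hP⟩,
    fun ⟨h, hP⟩ => ⟨⟨h.1, hP⟩, h.2.1⟩⟩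

lemma subset_gens_and_card_eq_two_of_mem_orderTwoPrimColls {P : Finset (NZ n)}
    (hP : P ∈ orderTwoPrimColls F) : P ⊆ F.gens ∧ #P = 2 :=
  Finset.mem_powersetCard.mp (Finset.mem_filter.mp hP).1

lemma mem_gens_of_pair_mem_orderTwoPrimColls {x p : NZ n} (h : {x, p} ∈ orderTwoPrimColls F) :
    p ∈ F.gens :=
  (subset_gens_and_card_eq_two_of_mem_orderTwoPrimColls h).1
    (Finset.mem_insert_of_mem (Finset.mem_singleton_self p))

variable (F)

lemma choose_two_card_gens :
    (#F.gens).choose 2 = #(F.cones.filter (#· = 2)) + #(orderTwoPrimColls F) := by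
  have hcones : (F.gens.powersetCard 2).filter (· ∈ F.cones) = F.cones.filter (#· = 2) := by
    ext P
    simp only [Finset.mem_filter, Finset.mem_powersetCard]
    exact ⟨fun ⟨⟨_, hP⟩, hmem⟩ => ⟨hmem, hP⟩, fun ⟨hmem, hP⟩ => ⟨⟨F.cones_subset P hmem, hP⟩, hmem⟩⟩
  rw [← Finset.card_powersetCard, ← hcones, orderTwoPrimColls]
  exact (Finset.card_filter_add_card_filter_not _).symm

lemma ncard_orderTwoPrimColls :
    {P : Finset (NZ n) | IsPrimColl F P ∧ #P = 2}.ncard = #(orderTwoPrimColls F) := by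
  rw [← Set.ncard_coe_finset]
  congr 1
  ext P
  exact mem_orderTwoPrimColls.symm

variable {F}

lemma deg_orderTwoPrimColls_le_two {x : NZ n}
    (hx : ∀ p q r : NZ n, p ≠ q → p ≠ r → q ≠ r →
      ¬(IsPrimColl F {x, p} ∧ IsPrimColl F {x, q} ∧ IsPrimColl F {x, r})) :
    deg (orderTwoPrimColls F) x ≤ 2 := by
  by_contra! h
  obtain ⟨p, q, r, hpq, hpr, hqr, hp, hq, hr⟩ := exists_pairs_of_two_lt_deg
    (fun e he => (subset_gens_and_card_eq_two_of_mem_orderTwoPrimColls he).2) h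
  exact hx p q r hpq hpr hqr ⟨(mem_orderTwoPrimColls.mp hp).1, (mem_orderTwoPrimColls.mp hq).1,
    (mem_orderTwoPrimColls.mp hr).1⟩

lemma deg_orderTwoPrimColls_le_one {y : NZ n}
    (hy : ∀ p q : NZ n, p ≠ q → IsPrimColl F {y, p} → IsPrimColl F {y, q} → p = -y ∨ q = -y)
    (hy_neg : -y ∉ F.gens) :
    deg (orderTwoPrimColls F) y ≤ 1 := by
  by_contra! h
  obtain ⟨p, q, hpq, hp, hq⟩ := exists_pairs_of_one_lt_deg
    (fun e he => (subset_gens_and_card_eq_two_of_mem_orderTwoPrimColls he).2) h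
  rcases hy p q hpq (mem_orderTwoPrimColls.mp hp).1 (mem_orderTwoPrimColls.mp hq).1 with rfl | rfl
  · exact hy_neg (mem_gens_of_pair_mem_orderTwoPrimColls hp)
  · exact hy_neg (mem_gens_of_pair_mem_orderTwoPrimColls hq)

theorem four_mul_card_orderTwoPrimColls_le
    (hdeg : ∀ x ∈ F.gens, ∀ p q r : NZ n, p ≠ q → p ≠ r → q ≠ r →
      ¬(IsPrimColl F {x, p} ∧ IsPrimColl F {x, q} ∧ IsPrimColl F {x, r}))
    (hpair : ∀ x ∈ F.gens, ∀ p q : NZ n, p ≠ q → IsPrimColl F {x, p} → IsPrimColl F {x, q} →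
      (p = -x ∧ -q ∉ F.gens) ∨ (q = -x ∧ -p ∉ F.gens)) :
    4 * #(orderTwoPrimColls F) ≤ 3 * #F.gens := by
  have hE := fun e (he : e ∈ orderTwoPrimColls F) =>
    subset_gens_and_card_eq_two_of_mem_orderTwoPrimColls he
  have hdeg_one : ∀ y ∈ F.gens, -y ∉ F.gens → deg (orderTwoPrimColls F) y ≤ 1 :=
    fun y hy => deg_orderTwoPrimColls_le_one fun p q hpq hp hq =>
      (hpair y hy p q hpq hp hq).imp And.left And.left
  refine four_mul_card_le_three_mul_card hE (fun x hx => deg_orderTwoPrimColls_le_two (hdeg x hx))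
    fun x hx hx_deg => ?_
  obtain ⟨p, q, hpq, hp, hq⟩ := exists_pairs_of_one_lt_deg (fun e he => (hE e he).2)
    (hx_deg ▸ one_lt_two)
  have hp_gens := mem_gens_of_pair_mem_orderTwoPrimColls hp
  have hq_gens := mem_gens_of_pair_mem_orderTwoPrimColls hq
  rcases hpair x hx p q hpq (mem_orderTwoPrimColls.mp hp).1 (mem_orderTwoPrimColls.mp hq).1 with
    ⟨-, hq_neg⟩ | ⟨-, hp_neg⟩
  · exact ⟨q, hq_gens, hq, hdeg_one q hq_gens hq_neg⟩
  · exact ⟨p, hp_gens, hp, hdeg_one p hp_gens hp_neg⟩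

end OrderTwo

theorem few_order_two_collections_general {n : ℕ} (F : Fan n)
    (hyp : ∀ x ∈ F.gens,
      (∀ p q r : NZ n, p ≠ q → p ≠ r → q ≠ r →
        ¬(IsPrimColl F {x, p} ∧ IsPrimColl F {x, q} ∧ IsPrimColl F {x, r})) ∧
      (∀ p q : NZ n, p ≠ q → IsPrimColl F {x, p} → IsPrimColl F {x, q} →
        (p = -x ∧ -q ∉ F.gens ∧ -x - q ∉ F.gens) ∨
        (q = -x ∧ -p ∉ F.gens ∧ -x - p ∉ F.gens))) :
    let f₀ := F.gens.card
    let f₁ := (F.cones.filter (fun σ => σ.card = 2)).card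
    ((f₀.choose 2 : ℚ) - (f₁ : ℚ) ≤ 3 / 4 * (f₀ : ℚ)) ∧
    ((f₀.choose 2 : ℤ) - (f₁ : ℤ) =
      (({P : Finset (NZ n) | IsPrimColl F P ∧ P.card = 2} : Set (Finset (NZ n))).ncard : ℤ)) := by
  intro f₀ f₁
  have hcount : f₀.choose 2 = f₁ + #(orderTwoPrimColls F) := choose_two_card_gens F
  have hbound : 4 * #(orderTwoPrimColls F) ≤ 3 * f₀ :=
    four_mul_card_orderTwoPrimColls_le (fun x hx => (hyp x hx).1) fun x hx p q hpq hp hq =>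
      ((hyp x hx).2 p q hpq hp hq).imp (fun h => ⟨h.1, h.2.1⟩) fun h => ⟨h.1, h.2.1⟩
  refine ⟨?_, ?_⟩
  · rw [hcount]
    have : (4 * #(orderTwoPrimColls F) : ℚ) ≤ 3 * f₀ := by exact_mod_cast hbound
    push_cast
    linarith
  · rw [ncard_orderTwoPrimColls, hcount]
    push_cast
    ring

/-- In a Fano fan where every generator `x` lies in at most two primitive collections of
order two, and when in exactly two they are `{x,-x}` and `{x,y}` with `-y ∉ G(Σ)` and
`-x-y ∉ G(Σ)`, the number of primitive collections of order two is at most `(3/4)·f₀`;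
that is, `C(f₀,2) - f₁ ≤ (3/4)·f₀`. -/
theorem few_order_two_collections {n : ℕ} (F : Fan n) (hF : IsFano F)
    (hyp : ∀ x ∈ F.gens,
      (∀ p q r : NZ n, p ≠ q → p ≠ r → q ≠ r →
        ¬(IsPrimColl F {x, p} ∧ IsPrimColl F {x, q} ∧ IsPrimColl F {x, r})) ∧
      (∀ p q : NZ n, p ≠ q → IsPrimColl F {x, p} → IsPrimColl F {x, q} →
        (p = -x ∧ -q ∉ F.gens ∧ -x - q ∉ F.gens) ∨
        (q = -x ∧ -p ∉ F.gens ∧ -x - p ∉ F.gens))) :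
    let f₀ := F.gens.card
    let f₁ := (F.cones.filter (fun σ => σ.card = 2)).card
    ((f₀.choose 2 : ℚ) - (f₁ : ℚ) ≤ 3 / 4 * (f₀ : ℚ)) ∧
    ((f₀.choose 2 : ℤ) - (f₁ : ℤ) =
      (({P : Finset (NZ n) | IsPrimColl F P ∧ P.card = 2} : Set (Finset (NZ n))).ncard : ℤ)) :=
  few_order_two_collections_general F hyp

end ToricFano
end
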